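/- If E and E′ are distinct line classes then ⟨E,E′⟩ ∈ {0,1}; moreover, for every line class E there are exactly 10 line classes E′ ≠ E with ⟨E,E′⟩ = 1 (each line on the cubic surface meets precisely 10 others). -/

import Mathlib

/-- The Picard lattice of the cubic surface: free ℤ-module of rank 7
with basis h, e₁, …, e₆ (coordinates: index 0 ↦ coefficient of h,
index i+1 ↦ coefficient of eᵢ). -/
abbrev Lam : Type := Fin 7 → ℤ

/-- The intersection form: ⟨h,h⟩ = 1, ⟨eᵢ,eᵢ⟩ = −1, distinct basis vectors orthogonal. -/
def ip (x y : Lam) : ℤ := x 0 * y 0 - ∑ i : Fin 6, x i.succ * y i.succ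

/-- The canonical class K = −3h + e₁ + ⋯ + e₆. -/
def Kc : Lam := ![-3, 1, 1, 1, 1, 1, 1]

/-- A line class: x with ⟨x,x⟩ = −1 and ⟨x,K⟩ = −1. -/
def IsLine (x : Lam) : Prop := ip x x = -1 ∧ ip x Kc = -1

/-- A fiber class: x with ⟨x,x⟩ = 0 and ⟨x,K⟩ = −2. -/
def IsFiber (x : Lam) : Prop := ip x x = 0 ∧ ip x Kc = -2

def L : List Lam := [
  ![0,1,0,0,0,0,0],
  ![0,0,1,0,0,0,0],
  ![0,0,0,1,0,0,0],
  ![0,0,0,0,1,0,0],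
  ![0,0,0,0,0,1,0],
  ![0,0,0,0,0,0,1],
  ![1,-1,-1,0,0,0,0],
  ![1,-1,0,-1,0,0,0],
  ![1,-1,0,0,-1,0,0],
  ![1,-1,0,0,0,-1,0],
  ![1,-1,0,0,0,0,-1],
  ![1,0,-1,-1,0,0,0],
  ![1,0,-1,0,-1,0,0],
  ![1,0,-1,0,0,-1,0],
  ![1,0,-1,0,0,0,-1],
  ![1,0,0,-1,-1,0,0],
  ![1,0,0,-1,0,-1,0],
  ![1,0,0,-1,0,0,-1],
  ![1,0,0,0,-1,-1,0],
  ![1,0,0,0,-1,0,-1],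
  ![1,0,0,0,0,-1,-1],
  ![2,0,-1,-1,-1,-1,-1],
  ![2,-1,0,-1,-1,-1,-1],
  ![2,-1,-1,0,-1,-1,-1],
  ![2,-1,-1,-1,0,-1,-1],
  ![2,-1,-1,-1,-1,0,-1],
  ![2,-1,-1,-1,-1,-1,0]]

lemma ip_eval (x y : Lam) : ip x y = x 0 * y 0 - (x 1 * y 1 + x 2 * y 2 + x 3 * y 3 + x 4 * y 4 + x 5 * y 5 + x 6 * y 6) := by
  simp [ip, Fin.sum_univ_six]

lemma msn (y : ℤ) : 0 ≤ y * (y + 1) := by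
  rcases le_or_gt 0 y with h | h
  · nlinarith
  · nlinarith

lemma mpn (y : ℤ) : 0 ≤ y * (y - 1) := by
  rcases le_or_gt 1 y with h | h
  · nlinarith
  · nlinarith

set_option maxHeartbeats 2000000 in
lemma classify_aux (x0 x1 x2 x3 x4 x5 x6 : ℤ)
    (h1 : x0 * x0 - (x1 * x1 + x2 * x2 + x3 * x3 + x4 * x4 + x5 * x5 + x6 * x6) = -1)
    (h2 : x0 * (-3) - (x1 + x2 + x3 + x4 + x5 + x6) = -1) :
    (![x0, x1, x2, x3, x4, x5, x6] : Lam) ∈ L := by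
  have hcs : (x1 + x2 + x3 + x4 + x5 + x6)^2 ≤ 6 * (x1*x1 + x2*x2 + x3*x3 + x4*x4 + x5*x5 + x6*x6) := by
    nlinarith [sq_nonneg (x1-x2), sq_nonneg (x1-x3), sq_nonneg (x1-x4), sq_nonneg (x1-x5), sq_nonneg (x1-x6),
      sq_nonneg (x2-x3), sq_nonneg (x2-x4), sq_nonneg (x2-x5), sq_nonneg (x2-x6),
      sq_nonneg (x3-x4), sq_nonneg (x3-x5), sq_nonneg (x3-x6),
      sq_nonneg (x4-x5), sq_nonneg (x4-x6), sq_nonneg (x5-x6)]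
  have hq : -3*x0^2 + 6*x0 + 5 ≥ 0 := by nlinarith
  have hl : -8 ≤ 12 * x0 := by nlinarith [sq_nonneg (x0 + 1)]
  have hr : 12 * x0 ≤ 32 := by nlinarith [sq_nonneg (x0 - 3)]
  have hb1 : 0 ≤ x0 := by omega
  have hb2 : x0 ≤ 2 := by omega
  interval_cases x0
  · have hz : x1*(x1-1) + x2*(x2-1) + x3*(x3-1) + x4*(x4-1) + x5*(x5-1) + x6*(x6-1) = 0 := by linarith
    have n1 := mpn x1; have n2 := mpn x2; have n3 := mpn x3
    have n4 := mpn x4; have n5 := mpn x5; have n6 := mpn x6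
    have e1 : x1 = 0 ∨ x1 = 1 := by
      have : x1 * (x1 - 1) = 0 := by linarith
      rcases mul_eq_zero.mp this with h | h
      · left; exact h
      · right; omega
    have e2 : x2 = 0 ∨ x2 = 1 := by
      have : x2 * (x2 - 1) = 0 := by linarith
      rcases mul_eq_zero.mp this with h | h
      · left; exact h
      · right; omega
    have e3 : x3 = 0 ∨ x3 = 1 := by
      have : x3 * (x3 - 1) = 0 := by linarith
      rcases mul_eq_zero.mp this with h | h
      · left; exact h
      · right; omega
    have e4 : x4 = 0 ∨ x4 = 1 := by
      have : x4 * (x4 - 1) = 0 := by linarith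
      rcases mul_eq_zero.mp this with h | h
      · left; exact h
      · right; omega
    have e5 : x5 = 0 ∨ x5 = 1 := by
      have : x5 * (x5 - 1) = 0 := by linarith
      rcases mul_eq_zero.mp this with h | h
      · left; exact h
      · right; omega
    have e6 : x6 = 0 ∨ x6 = 1 := by
      have : x6 * (x6 - 1) = 0 := by linarith
      rcases mul_eq_zero.mp this with h | h
      · left; exact h
      · right; omega
    rcases e1 with rfl | rfl <;> rcases e2 with rfl | rfl <;> rcases e3 with rfl | rfl <;>
      rcases e4 with rfl | rfl <;> rcases e5 with rfl | rfl <;> rcases e6 with rfl | rfl <;>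
      first
        | decide
        | (exfalso; revert h2; decide)
  · have hz : x1*(x1+1) + x2*(x2+1) + x3*(x3+1) + x4*(x4+1) + x5*(x5+1) + x6*(x6+1) = 0 := by linarith
    have n1 := msn x1; have n2 := msn x2; have n3 := msn x3
    have n4 := msn x4; have n5 := msn x5; have n6 := msn x6
    have e1 : x1 = 0 ∨ x1 = -1 := by
      have : x1 * (x1 + 1) = 0 := by linarith
      rcases mul_eq_zero.mp this with h | h
      · left; exact h
      · right; omega
    have e2 : x2 = 0 ∨ x2 = -1 := by
      have : x2 * (x2 + 1) = 0 := by linarith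
      rcases mul_eq_zero.mp this with h | h
      · left; exact h
      · right; omega
    have e3 : x3 = 0 ∨ x3 = -1 := by
      have : x3 * (x3 + 1) = 0 := by linarith
      rcases mul_eq_zero.mp this with h | h
      · left; exact h
      · right; omega
    have e4 : x4 = 0 ∨ x4 = -1 := by
      have : x4 * (x4 + 1) = 0 := by linarith
      rcases mul_eq_zero.mp this with h | h
      · left; exact h
      · right; omega
    have e5 : x5 = 0 ∨ x5 = -1 := by
      have : x5 * (x5 + 1) = 0 := by linarith
      rcases mul_eq_zero.mp this with h | h
      · left; exact h
      · right; omega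
    have e6 : x6 = 0 ∨ x6 = -1 := by
      have : x6 * (x6 + 1) = 0 := by linarith
      rcases mul_eq_zero.mp this with h | h
      · left; exact h
      · right; omega
    rcases e1 with rfl | rfl <;> rcases e2 with rfl | rfl <;> rcases e3 with rfl | rfl <;>
      rcases e4 with rfl | rfl <;> rcases e5 with rfl | rfl <;> rcases e6 with rfl | rfl <;>
      first
        | decide
        | (exfalso; revert h2; decide)
  · have hz : x1*(x1+1) + x2*(x2+1) + x3*(x3+1) + x4*(x4+1) + x5*(x5+1) + x6*(x6+1) = 0 := by linarith
    have n1 := msn x1; have n2 := msn x2; have n3 := msn x3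
    have n4 := msn x4; have n5 := msn x5; have n6 := msn x6
    have e1 : x1 = 0 ∨ x1 = -1 := by
      have : x1 * (x1 + 1) = 0 := by linarith
      rcases mul_eq_zero.mp this with h | h
      · left; exact h
      · right; omega
    have e2 : x2 = 0 ∨ x2 = -1 := by
      have : x2 * (x2 + 1) = 0 := by linarith
      rcases mul_eq_zero.mp this with h | h
      · left; exact h
      · right; omega
    have e3 : x3 = 0 ∨ x3 = -1 := by
      have : x3 * (x3 + 1) = 0 := by linarith
      rcases mul_eq_zero.mp this with h | h
      · left; exact h
      · right; omega
    have e4 : x4 = 0 ∨ x4 = -1 := by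
      have : x4 * (x4 + 1) = 0 := by linarith
      rcases mul_eq_zero.mp this with h | h
      · left; exact h
      · right; omega
    have e5 : x5 = 0 ∨ x5 = -1 := by
      have : x5 * (x5 + 1) = 0 := by linarith
      rcases mul_eq_zero.mp this with h | h
      · left; exact h
      · right; omega
    have e6 : x6 = 0 ∨ x6 = -1 := by
      have : x6 * (x6 + 1) = 0 := by linarith
      rcases mul_eq_zero.mp this with h | h
      · left; exact h
      · right; omega
    rcases e1 with rfl | rfl <;> rcases e2 with rfl | rfl <;> rcases e3 with rfl | rfl <;>
      rcases e4 with rfl | rfl <;> rcases e5 with rfl | rfl <;> rcases e6 with rfl | rfl <;>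
      first
        | decide
        | (exfalso; revert h2; decide)

lemma line_mem (x : Lam) (hx : IsLine x) : x ∈ L := by
  obtain ⟨h1, h2⟩ := hx
  rw [ip_eval] at h1 h2
  have hx7 : x = ![x 0, x 1, x 2, x 3, x 4, x 5, x 6] := by
    funext i; fin_cases i <;> rfl
  rw [hx7]
  apply classify_aux
  · linarith
  · have h2' : x 0 * (-3) - (x 1 + x 2 + x 3 + x 4 + x 5 + x 6) = -1 := by
      have : Kc 1 = 1 := rfl
      have k0 : (Kc 0 : ℤ) = -3 := rfl
      have k1 : (Kc 1 : ℤ) = 1 := rfl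
      have k2 : (Kc 2 : ℤ) = 1 := rfl
      have k3 : (Kc 3 : ℤ) = 1 := rfl
      have k4 : (Kc 4 : ℤ) = 1 := rfl
      have k5 : (Kc 5 : ℤ) = 1 := rfl
      have k6 : (Kc 6 : ℤ) = 1 := rfl
      rw [k0, k1, k2, k3, k4, k5, k6] at h2 <;> linarith
    linarith

lemma all_lines : ∀ x ∈ L, IsLine x := by
  simp only [IsLine]; decide

lemma part1aux : ∀ E ∈ L, ∀ E' ∈ L, E ≠ E' → ip E E' = 0 ∨ ip E E' = 1 := by decide

lemma count10 : ∀ E ∈ L, ((L.filter fun E' => E' ≠ E ∧ ip E E' = 1).toFinset.card = 10) := by decide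

/-- Distinct line classes meet with intersection number 0 or 1, and each line class
meets exactly 10 others with intersection number 1. -/
theorem lines_meet_ten_others :
    (∀ E E' : Lam, IsLine E → IsLine E' → E ≠ E' → ip E E' = 0 ∨ ip E E' = 1) ∧
    (∀ E : Lam, IsLine E →
      {E' : Lam | IsLine E' ∧ E' ≠ E ∧ ip E E' = 1}.Finite ∧
      {E' : Lam | IsLine E' ∧ E' ≠ E ∧ ip E E' = 1}.ncard = 10) := by
  constructor
  · intro E E' hE hE' hne
    exact part1aux E (line_mem E hE) E' (line_mem E' hE') hne
  · intro E hE
    have hset : {E' : Lam | IsLine E' ∧ E' ≠ E ∧ ip E E' = 1} =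
        ((L.filter fun E' => E' ≠ E ∧ ip E E' = 1).toFinset : Set Lam) := by
      ext E'
      simp only [Set.mem_setOf_eq, List.coe_toFinset, Set.mem_setOf_eq, List.mem_filter,
        decide_eq_true_eq]
      constructor
      · rintro ⟨hl, hne, hip⟩
        exact ⟨line_mem E' hl, hne, hip⟩
      · rintro ⟨hmem, hne, hip⟩
        exact ⟨all_lines E' hmem, hne, hip⟩
    rw [hset]
    refine ⟨Finset.finite_toSet _, ?_⟩
    rw [Set.ncard_coe_finset]
    exact count10 E (line_mem E hE)
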